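/- Let G be a graph and S ⊆ V(G) an irredundant set. Then for each twin class T of G, either T ∩ S = ∅ or T ⊆ S. -/
import Mathlib


namespace VI

open SimpleGraph

variable {V : Type*}

/-- Total weight of a set of vertices. -/
noncomputable def setWeight (w : V → ℕ) (X : Set V) : ℕ := ∑ᶠ v ∈ X, w v

/-- Maximum weight of a connected component of `G − S`. -/
noncomputable def compMax (G : SimpleGraph V) (w : V → ℕ) (S : Set V) : ℕ :=
  sSup {n | ∃ C : (G.induce Sᶜ).ConnectedComponent, n = setWeight w (Subtype.val '' C.supp)}

/-- `w(S) + max_{C ∈ cc(G−S)} w(V(C))`. -/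
noncomputable def viCost (G : SimpleGraph V) (w : V → ℕ) (S : Set V) : ℕ :=
  setWeight w S + compMax G w S

/-- The weighted vertex integrity of `G`. -/
noncomputable def wvi (G : SimpleGraph V) (w : V → ℕ) : ℕ := ⨅ S : Set V, viCost G w S

/-- Maximum number of vertices of a connected component of `G − S`. -/
noncomputable def uCompMax (G : SimpleGraph V) (S : Set V) : ℕ :=
  sSup {n | ∃ C : (G.induce Sᶜ).ConnectedComponent, n = C.supp.ncard}

/-- `|S| + max_{C ∈ cc(G−S)} |V(C)|`. -/
noncomputable def uViCost (G : SimpleGraph V) (S : Set V) : ℕ := S.ncard + uCompMax G S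

/-- The (unweighted) vertex integrity of `G`. -/
noncomputable def uvi (G : SimpleGraph V) : ℕ := ⨅ S : Set V, uViCost G S

/-- A vertex `v` is redundant w.r.t. `S` if at most one connected component of `G − S`
contains a neighbor of `v`. -/
def Redundant (G : SimpleGraph V) (S : Set V) (v : V) : Prop :=
  {C : (G.induce Sᶜ).ConnectedComponent | ∃ u : (Sᶜ : Set V), G.Adj v ↑u ∧ u ∈ C.supp}.Subsingleton

/-- `S` is irredundant if it contains no redundant vertex. -/
def Irredundant (G : SimpleGraph V) (S : Set V) : Prop := ∀ v ∈ S, ¬ Redundant G S v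

end VI

namespace VI

/-- Two vertices are twins if they have the same neighborhood except for themselves. -/
def Twins {V : Type*} (G : SimpleGraph V) (u v : V) : Prop :=
  G.neighborSet u \ {v} = G.neighborSet v \ {u}

/-- A twin class is a maximal set of pairwise twin vertices. -/
def IsTwinClass {V : Type*} (G : SimpleGraph V) (T : Set V) : Prop :=
  T.Pairwise (Twins G) ∧ ∀ T' : Set V, T ⊆ T' → T'.Pairwise (Twins G) → T' = T

end VI

open VI SimpleGraph in
/-- An irredundant set contains either none or all of a twin class. -/
theorem statement3 {V : Type*} [Fintype V] (G : SimpleGraph V) (S : Set V)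
    (hS : Irredundant G S) (T : Set V) (hT : IsTwinClass G T) :
    T ∩ S = ∅ ∨ T ⊆ S := by
  by_contra h
  push_neg at h
  obtain ⟨hne, hnsub⟩ := h
  obtain ⟨v, hvT, hvS⟩ := hne
  obtain ⟨u, huT, huS⟩ := Set.not_subset.1 hnsub
  have htw : Twins G v u := hT.1 hvT huT (fun h => huS (h ▸ hvS))
  have hred := hS v hvS
  rw [Redundant, Set.not_subsingleton_iff] at hred
  obtain ⟨C1, hC1, C2, hC2, hCne⟩ := hred
  set uu : (Sᶜ : Set V) := ⟨u, huS⟩ with huu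
  have key : ∀ C : (G.induce Sᶜ).ConnectedComponent,
      (∃ w : (Sᶜ : Set V), G.Adj v ↑w ∧ w ∈ C.supp) →
      C = (G.induce Sᶜ).connectedComponentMk uu := by
    intro C ⟨w, hadj, hw⟩
    rw [SimpleGraph.ConnectedComponent.mem_supp_iff] at hw
    by_cases hwu : w = uu
    · rw [← hw, hwu]
    · have hwne : (w : V) ≠ u := fun h => hwu (Subtype.ext h)
      have hmem : (w : V) ∈ G.neighborSet v \ {u} := ⟨hadj, hwne⟩
      rw [htw] at hmem
      have hadj2 : G.Adj u ↑w := hmem.1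
      have hadj3 : (G.induce Sᶜ).Adj uu w := by
        exact hadj2
      rw [← hw]
      exact (SimpleGraph.ConnectedComponent.sound hadj3.reachable).symm
  exact hCne ((key C1 hC1).trans (key C2 hC2).symm)
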